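/- arXiv:1312.1617 — 4 statements merged into one kernel-verified Lean document; each statement's English description precedes it below -/
import Mathlib

section
/- Let d ≥ 2 be an integer and let λ be a real number with λ > 0. Then for every real x ≥ 1 one has (x+λ-1)^d - (x-1)^d > 0 (so the real map U_{dλ}(x) = ((x+λ-1)^d + (λ-1)(x-1)^d)^d / ((x+λ-1)^d - (x-1)^d)^d is well defined on [1,∞)), U_{dλ}(1) = 1, and U_{dλ} is strictly increasing on the interval [1,∞). -/
/-!
Writing `t = x - 1 ≥ 0`, the numerator base equals the denominator base plus `λ tᵈ`, so
`U_{dλ}(x) = (1 + λ tᵈ / ((t + λ)ᵈ - tᵈ))ᵈ`. The inner fraction is strictly increasing in `t`: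
after cross-multiplying, this is `(s (t + λ))ᵈ < (t (s + λ))ᵈ` for `0 ≤ s < t`, i.e. `s λ < t λ`.
-/

/-- The real renormalization transformation
`U_{dλ}(x) = ((x+λ-1)^d + (λ-1)(x-1)^d)^d / ((x+λ-1)^d - (x-1)^d)^d`. -/
noncomputable def Ur (d : ℕ) (l : ℝ) (x : ℝ) : ℝ :=
  ((x + l - 1) ^ d + (l - 1) * (x - 1) ^ d) ^ d / ((x + l - 1) ^ d - (x - 1) ^ d) ^ d

theorem sub_pow_pos_of_lt {d : ℕ} (hd : d ≠ 0) {a b : ℝ} (ha : 0 ≤ a) (hab : a < b) :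
    0 < b ^ d - a ^ d :=
  sub_pos.mpr (pow_lt_pow_left₀ hab ha hd)

theorem pow_div_add_pow_sub_pow_lt {d : ℕ} (hd : d ≠ 0) {l s t : ℝ} (hl : 0 < l) (hs : 0 ≤ s)
    (hst : s < t) : s ^ d / ((s + l) ^ d - s ^ d) < t ^ d / ((t + l) ^ d - t ^ d) := by
  rw [div_lt_div_iff₀ (sub_pow_pos_of_lt hd hs (by linarith))
    (sub_pow_pos_of_lt hd (by linarith) (by linarith))]
  have hcross : (s * (t + l)) ^ d < (t * (s + l)) ^ d :=
    pow_lt_pow_left₀ (by nlinarith) (mul_nonneg hs (by linarith)) hd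
  rw [mul_pow, mul_pow] at hcross
  linarith

theorem Ur_eq_one_add_pow {d : ℕ} {l x : ℝ} (h : (x + l - 1) ^ d - (x - 1) ^ d ≠ 0) :
    Ur d l x = (1 + l * ((x - 1) ^ d / ((x - 1 + l) ^ d - (x - 1) ^ d))) ^ d := by
  rw [← sub_add_eq_add_sub] at h
  rw [Ur, ← div_pow, ← sub_add_eq_add_sub]
  congr 1
  field_simp
  ring

/-- for `d ≥ 2` and real `λ > 0`, the denominator `(x+λ-1)^d - (x-1)^d` is
positive for all `x ≥ 1`, `U_{dλ}(1) = 1`, and `U_{dλ}` is strictly increasing on `[1,∞)`. -/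
theorem Ur_strictMonoOn (d : ℕ) (hd : 2 ≤ d) (l : ℝ) (hl : 0 < l) :
    (∀ x : ℝ, 1 ≤ x → 0 < (x + l - 1) ^ d - (x - 1) ^ d) ∧
    Ur d l 1 = 1 ∧
    StrictMonoOn (Ur d l) (Set.Ici 1) := by
  have hd0 : d ≠ 0 := by omega
  have hden : ∀ x : ℝ, 1 ≤ x → 0 < (x + l - 1) ^ d - (x - 1) ^ d := fun x hx =>
    sub_pow_pos_of_lt hd0 (by linarith) (by linarith)
  refine ⟨hden, ?_, fun x (hx : 1 ≤ x) y (hy : 1 ≤ y) hxy => ?_⟩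
  · rw [Ur_eq_one_add_pow (hden 1 le_rfl).ne']
    simp [zero_pow hd0]
  · rw [Ur_eq_one_add_pow (hden x hx).ne', Ur_eq_one_add_pow (hden y hy).ne']
    have hfrac_nonneg : 0 ≤ (x - 1) ^ d / ((x - 1 + l) ^ d - (x - 1) ^ d) :=
      div_nonneg (pow_nonneg (by linarith) d)
        (sub_pow_pos_of_lt hd0 (by linarith) (by linarith)).le
    have hfrac_lt :=
      pow_div_add_pow_sub_pow_lt hd0 hl (sub_nonneg.mpr hx) (sub_lt_sub_right hxy 1)
    exact pow_lt_pow_left₀ (by gcongr) (by positivity) hd0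
end

section
/- Let d ≥ 2 be an integer and let λ be a real number with λ > 0. Then the real map U_{dλ}(x) = ((x+λ-1)^d + (λ-1)(x-1)^d)^d / ((x+λ-1)^d - (x-1)^d)^d has at least one fixed point in the open interval (1,+∞): there exists a real x > 1 with U_{dλ}(x) = x. -/
/-!
Writing `x = 1 + y`, the numerator of `U` is the denominator `D = (y + λ)^d - y^d` plus `λ y^d`, so
`U(1 + y) = (1 + λ y^d / D)^d`. Hence `U(1) = 1`, and since `d ≥ 2` the correction `λ y^d / D` is
of order `y^d`, so `U'(1) = 0` and `U(x) < x` just to the right of `1`. For large `y`,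
`D ≤ d λ (2y)^(d-1)` makes `λ y^d / D ≥ y / (d 2^(d-1))`, and `U(1 + y) ≥ (1 + λ y^d / D)^2`
grows quadratically, so `U(x) > x` somewhere. The intermediate value theorem on `(1, ∞)`,
where `D ≥ λ^d > 0` keeps `U` continuous, gives the fixed point.
-/

open Set Filter Topology

lemma add_pow_sub_pow_pos {y l : ℝ} (hy : 0 ≤ y) (hl : 0 < l) {n : ℕ} (hn : n ≠ 0) :
    0 < (y + l) ^ n - y ^ n :=
  (pow_pos hl n).trans_le (by linarith [pow_add_pow_le hy hl.le hn])

lemma add_pow_sub_pow_le {y l : ℝ} (hy : 0 ≤ y) (hl : 0 ≤ l) (n : ℕ) :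
    (y + l) ^ n - y ^ n ≤ l * n * (y + l) ^ (n - 1) := by
  have hmax : max |y + l| |y| = y + l := by
    rw [abs_of_nonneg hy, abs_of_nonneg (by positivity), max_eq_left (by linarith)]
  calc (y + l) ^ n - y ^ n ≤ |(y + l) ^ n - y ^ n| := le_abs_self _
    _ ≤ |y + l - y| * n * max |y + l| |y| ^ (n - 1) := abs_pow_sub_pow_le _ _ _
    _ = l * n * (y + l) ^ (n - 1) := by rw [hmax, add_sub_cancel_left, abs_of_nonneg hl]

lemma div_le_mul_pow_div_add_pow_sub_pow {n : ℕ} (hn : n ≠ 0) {y l : ℝ} (hl : 0 < l)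
    (hly : l ≤ y) : y / (n * 2 ^ (n - 1)) ≤ l * y ^ n / ((y + l) ^ n - y ^ n) := by
  have hy : 0 ≤ y := hl.le.trans hly
  rw [div_le_div_iff₀ (by positivity) (add_pow_sub_pow_pos hy hl hn)]
  calc y * ((y + l) ^ n - y ^ n) ≤ y * (l * n * (2 * y) ^ (n - 1)) := by
        gcongr
        exact (add_pow_sub_pow_le hy hl.le n).trans (by gcongr; linarith)
    _ = l * (y * y ^ (n - 1)) * (n * 2 ^ (n - 1)) := by ring
    _ = l * y ^ n * (n * 2 ^ (n - 1)) := by rw [mul_pow_sub_one hn]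

lemma Ur_one_add {d : ℕ} {l y : ℝ} (hD : (y + l) ^ d - y ^ d ≠ 0) :
    Ur d l (1 + y) = (1 + l * y ^ d / ((y + l) ^ d - y ^ d)) ^ d := by
  rw [Ur, ← div_pow, add_sub_cancel_left, show 1 + y + l - 1 = y + l by ring]
  congr 1
  field_simp
  ring

lemma Ur_one (d : ℕ) {l : ℝ} (hl : l ≠ 0) : Ur d l 1 = 1 := by
  rcases eq_or_ne d 0 with rfl | hd
  · simp [Ur]
  · simp [Ur, zero_pow hd, hl]

lemma continuousOn_Ur {d : ℕ} (hd : d ≠ 0) {l : ℝ} (hl : 0 < l) :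
    ContinuousOn (Ur d l) (Ici 1) := by
  refine ContinuousOn.div (by fun_prop) (by fun_prop) fun x hx ↦ pow_ne_zero _ ?_
  have hD := add_pow_sub_pow_pos (sub_nonneg.2 (mem_Ici.1 hx)) hl hd
  rw [sub_add_eq_add_sub] at hD
  exact hD.ne'

lemma hasDerivAt_Ur_one {d : ℕ} (hd : 2 ≤ d) {l : ℝ} (hl : l ≠ 0) : HasDerivAt (Ur d l) 0 1 := by
  have hx := hasDerivAt_id' (1 : ℝ)
  have hN := ((((hx.add_const l).sub_const 1).fun_pow d).fun_add
    (((hx.sub_const 1).fun_pow d).const_mul (l - 1))).fun_pow d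
  have hD :=
    ((((hx.add_const l).sub_const 1).fun_pow d).fun_sub ((hx.sub_const 1).fun_pow d)).fun_pow d
  refine (hN.fun_div hD (by simp [zero_pow (show d ≠ 0 by omega), hl])).congr_deriv ?_
  rw [add_sub_cancel_left, sub_self, zero_pow (by omega), zero_pow (by omega)]
  ring

lemma eventually_Ur_lt_self {d : ℕ} (hd : 2 ≤ d) {l : ℝ} (hl : l ≠ 0) :
    ∀ᶠ x in 𝓝[>] 1, Ur d l x < x := by
  filter_upwards [(hasDerivAt_Ur_one hd hl).hasDerivWithinAt.limsup_slope_le' (s := Ioi 1)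
    (lt_irrefl (1 : ℝ)) zero_lt_one, self_mem_nhdsWithin] with x hslope hx
  rw [slope_def_field, Ur_one d hl, div_lt_one (sub_pos.2 hx)] at hslope
  linarith

lemma exists_lt_Ur {d : ℕ} (hd : 2 ≤ d) {l : ℝ} (hl : 0 < l) : ∃ x, 1 < x ∧ x < Ur d l x := by
  set K : ℝ := d * 2 ^ (d - 1)
  have hK : 0 < K := by positivity
  set y := max l (K ^ 2)
  have hy : 0 < y := hl.trans_le (le_max_left _ _)
  refine ⟨1 + y, by linarith, ?_⟩
  rw [Ur_one_add (add_pow_sub_pow_pos hy.le hl (by omega)).ne']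
  set R := l * y ^ d / ((y + l) ^ d - y ^ d)
  have hR : y / K ≤ R := div_le_mul_pow_div_add_pow_sub_pow (by omega) hl (le_max_left _ _)
  have hyR : y ≤ R ^ 2 :=
    calc y ≤ (y / K) ^ 2 := by
          rw [div_pow, le_div_iff₀ (by positivity), sq y]
          exact mul_le_mul_of_nonneg_left (le_max_right _ _) hy.le
      _ ≤ R ^ 2 := by gcongr
  have hR0 : 0 < R := (div_pos hy hK).trans_le hR
  calc 1 + y < (1 + R) ^ 2 := by nlinarith
    _ ≤ (1 + R) ^ d := pow_le_pow_right₀ (by linarith) hd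

/-- for `d ≥ 2` and real `λ > 0`, the map `U_{dλ}` has at least one fixed point
in the open interval `(1,+∞)`. -/
theorem Ur_exists_fixed_point (d : ℕ) (hd : 2 ≤ d) (l : ℝ) (hl : 0 < l) :
    ∃ x : ℝ, 1 < x ∧ Ur d l x = x := by
  obtain ⟨b, hb1, hb⟩ := exists_lt_Ur hd hl
  obtain ⟨x, hx1, hx⟩ := isPreconnected_Ioi.intermediate_value₂_eventually₁ (mem_Ioi.2 hb1)
    (l := 𝓝[>] 1) inf_le_right continuousOn_id
    ((continuousOn_Ur (by omega) hl).mono Ioi_subset_Ici_self) hb.le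
    ((eventually_Ur_lt_self hd hl.ne').mono fun _ ↦ le_of_lt)
  exact ⟨x, hx1, hx.symm⟩
end

section
/- Let d ≥ 2 be an integer and let λ be a real number with λ < 0. Then for every real x ∈ [0,1] one has (x+λ-1)^d - (x-1)^d ≠ 0 (so the real map U_{dλ}(x) = ((x+λ-1)^d + (λ-1)(x-1)^d)^d / ((x+λ-1)^d - (x-1)^d)^d is well defined on [0,1]), U_{dλ} is monotone increasing on [0,1], and 0 < U_{dλ}(0) < 1. -/
open Set

noncomputable def renormRatio (d : ℕ) (a t : ℝ) : ℝ :=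
  ((t + a) ^ d - (1 + a) * t ^ d) / ((t + a) ^ d - t ^ d)

section
variable {d : ℕ} {a : ℝ}

lemma renormRatio_denom_pos (hd : d ≠ 0) (ha : 0 < a) {t : ℝ} (ht : 0 ≤ t) :
    0 < (t + a) ^ d - t ^ d :=
  sub_pos.2 (pow_lt_pow_left₀ (by linarith) ht hd)

lemma renormRatio_numer_nonneg (hd : d ≠ 0) (ha : 0 ≤ a) {t : ℝ} (ht : t ∈ Icc (0 : ℝ) 1) :
    0 ≤ (t + a) ^ d - (1 + a) * t ^ d := by
  obtain ⟨ht0, ht1⟩ := ht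
  have h_base : (1 + a) * t ≤ t + a := by nlinarith
  have h_exp : 1 + a ≤ (1 + a) ^ d := le_self_pow₀ (by linarith) hd
  refine sub_nonneg.2 ?_
  calc (1 + a) * t ^ d ≤ (1 + a) ^ d * t ^ d := by gcongr
    _ = ((1 + a) * t) ^ d := (mul_pow _ _ _).symm
    _ ≤ (t + a) ^ d := by gcongr

lemma renormRatio_nonneg (hd : d ≠ 0) (ha : 0 < a) {t : ℝ} (ht : t ∈ Icc (0 : ℝ) 1) :
    0 ≤ renormRatio d a t :=
  div_nonneg (renormRatio_numer_nonneg hd ha.le ht) (renormRatio_denom_pos hd ha ht.1).le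

lemma renormRatio_antitoneOn (hd : d ≠ 0) (ha : 0 < a) :
    AntitoneOn (renormRatio d a) (Ici 0) := by
  intro s (hs : 0 ≤ s) t (ht : 0 ≤ t) hst
  rw [renormRatio, renormRatio, div_le_div_iff₀ (renormRatio_denom_pos hd ha ht)
    (renormRatio_denom_pos hd ha hs)]
  have key : (s * (t + a)) ^ d ≤ (t * (s + a)) ^ d :=
    pow_le_pow_left₀ (by positivity) (by nlinarith) d
  rw [mul_pow, mul_pow] at key
  -- the cross-multiplied difference is `a * (t ^ d (s + a) ^ d - s ^ d (t + a) ^ d)`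
  linear_combination a * key

lemma renormRatio_one_pos (hd : 2 ≤ d) (ha : 0 < a) : 0 < renormRatio d a 1 := by
  have h_exp : 1 + a < (1 + a) ^ d := lt_self_pow₀ (by linarith) (by omega)
  rw [renormRatio, one_pow, mul_one]
  exact div_pos (by linarith) (by linarith)

lemma renormRatio_one_lt_one (hd : d ≠ 0) (ha : 0 < a) : renormRatio d a 1 < 1 := by
  have hden := renormRatio_denom_pos hd ha zero_le_one
  rw [renormRatio, div_lt_one hden, one_pow, mul_one]
  linarith

end

lemma neg_pow_sub_neg_pow {R : Type*} [CommRing R] (d : ℕ) (p q : R) :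
    (-p) ^ d - (-q) ^ d = (-1) ^ d * (p ^ d - q ^ d) := by
  rw [neg_pow p, neg_pow q]; ring

lemma Ur_denom_eq (d : ℕ) (l x : ℝ) :
    (x + l - 1) ^ d - (x - 1) ^ d = (-1) ^ d * ((1 - x + -l) ^ d - (1 - x) ^ d) := by
  rw [← neg_pow_sub_neg_pow]; ring_nf

lemma Ur_eq_renormRatio_pow (d : ℕ) (l x : ℝ) :
    Ur d l x = renormRatio d (-l) (1 - x) ^ d := by
  have h_num : (x + l - 1) ^ d + (l - 1) * (x - 1) ^ d
      = (-1) ^ d * ((1 - x + -l) ^ d - (1 + -l) * (1 - x) ^ d) := by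
    rw [show x + l - 1 = -(1 - x + -l) by ring, show x - 1 = -(1 - x) by ring, neg_pow,
      neg_pow (1 - x)]
    ring
  rw [Ur, renormRatio, h_num, Ur_denom_eq, mul_pow, mul_pow,
    mul_div_mul_left _ _ (pow_ne_zero _ (pow_ne_zero _ (neg_ne_zero.2 one_ne_zero))), div_pow]

/-- for `d ≥ 2` and real `λ < 0`, the denominator `(x+λ-1)^d - (x-1)^d` never
vanishes on `[0,1]`, `U_{dλ}` is monotone increasing on `[0,1]`, and `0 < U_{dλ}(0) < 1`. -/
theorem Ur_monotoneOn_Icc (d : ℕ) (hd : 2 ≤ d) (l : ℝ) (hl : l < 0) :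
    (∀ x ∈ Set.Icc (0 : ℝ) 1, (x + l - 1) ^ d - (x - 1) ^ d ≠ 0) ∧
    MonotoneOn (Ur d l) (Set.Icc 0 1) ∧
    0 < Ur d l 0 ∧ Ur d l 0 < 1 := by
  have hd0 : d ≠ 0 := by omega
  have ha : 0 < -l := neg_pos.2 hl
  have h_flip : ∀ x ∈ Icc (0 : ℝ) 1, 1 - x ∈ Icc (0 : ℝ) 1 := fun x ⟨hx0, hx1⟩ =>
    ⟨by linarith, by linarith⟩
  refine ⟨fun x hx => ?_, fun x hx y hy hxy => ?_, ?_, ?_⟩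
  · rw [Ur_denom_eq]
    exact mul_ne_zero (pow_ne_zero _ (by norm_num))
      (renormRatio_denom_pos hd0 ha (h_flip x hx).1).ne'
  · rw [Ur_eq_renormRatio_pow, Ur_eq_renormRatio_pow]
    exact pow_le_pow_left₀ (renormRatio_nonneg hd0 ha (h_flip x hx))
      (renormRatio_antitoneOn hd0 ha (h_flip y hy).1 (h_flip x hx).1 (by linarith)) d
  · rw [Ur_eq_renormRatio_pow, sub_zero]
    exact pow_pos (renormRatio_one_pos hd ha) d
  · rw [Ur_eq_renormRatio_pow, sub_zero]
    exact pow_lt_one₀ (renormRatio_one_pos hd ha).le (renormRatio_one_lt_one hd0 ha) hd0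
end

section
/- Let d ≥ 2 be an integer and q = -d. Then for all natural numbers m₁, m₂ and every integer n ≥ 1, the integer q^n - 1 does not divide q^{m₁} + q^{m₂}; in congruence form, q^{m₁} + q^{m₂} ≢ 0 (mod q^n - 1). -/
/-!
Modulo `q ^ n - 1` we have `q ^ n ≡ 1`, so exponents only matter modulo `n`, and multiplying
`q ^ m₁ + q ^ m₂` by `q ^ ((n - 1) * m₂)` turns it into `q ^ c + 1` with `c < n`. For `q = -d`
a parity check gives `0 < |q ^ c + 1| < |q ^ n - 1|`, so no such divisibility is possible.
-/

theorem Int.pow_modEq_pow_mod (q : ℤ) (m n : ℕ) : q ^ m ≡ q ^ (m % n) [ZMOD q ^ n - 1] :=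
  calc q ^ m = (q ^ n) ^ (m / n) * q ^ (m % n) := by rw [← pow_mul, ← pow_add, Nat.div_add_mod]
    _ ≡ 1 ^ (m / n) * q ^ (m % n) [ZMOD q ^ n - 1] := ((Int.modEq_sub _ _).pow _).mul_right _
    _ = q ^ (m % n) := by rw [one_pow, one_mul]

theorem Int.exists_lt_dvd_pow_add_one_of_dvd_pow_add_pow {q : ℤ} {m₁ m₂ n : ℕ} (hn : 0 < n)
    (h : q ^ n - 1 ∣ q ^ m₁ + q ^ m₂) : ∃ c < n, q ^ n - 1 ∣ q ^ c + 1 := by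
  obtain ⟨k, rfl⟩ := Nat.exists_eq_add_one_of_ne_zero hn.ne'
  refine ⟨(m₁ + k * m₂) % (k + 1), Nat.mod_lt _ hn, Int.modEq_zero_iff_dvd.mp ?_⟩
  calc q ^ ((m₁ + k * m₂) % (k + 1)) + 1
      ≡ q ^ (m₁ + k * m₂) + (q ^ (k + 1)) ^ m₂ [ZMOD q ^ (k + 1) - 1] :=
        (Int.pow_modEq_pow_mod _ _ _).symm.add
          (by simpa only [one_pow] using ((Int.modEq_sub (q ^ (k + 1)) 1).pow m₂).symm)
    _ = q ^ (k * m₂) * (q ^ m₁ + q ^ m₂) := by ring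
    _ ≡ q ^ (k * m₂) * 0 [ZMOD q ^ (k + 1) - 1] := (Int.modEq_zero_iff_dvd.mpr h).mul_left _
    _ = 0 := mul_zero _

theorem neg_pow_add_one_ne_zero {d : ℤ} (hd : 2 ≤ d) (c : ℕ) : (-d) ^ c + 1 ≠ 0 := by
  rcases c.even_or_odd with hc | hc
  · rw [hc.neg_pow]
    positivity
  · rw [hc.neg_pow]
    have := one_lt_pow₀ (by omega : 1 < d) hc.pos.ne'
    omega

theorem abs_neg_pow_add_one_lt {d : ℤ} (hd : 2 ≤ d) {c n : ℕ} (hcn : c < n) :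
    |(-d) ^ c + 1| < |(-d) ^ n - 1| := by
  have hdc : d ^ c < d ^ n := pow_lt_pow_right₀ (by omega) hcn
  have hc0 : 0 < d ^ c := by positivity
  rcases c.even_or_odd with hc | hc <;> rcases n.even_or_odd with hn | hn
  · have h4 : 4 * d ^ c ≤ d ^ n :=
      calc 4 * d ^ c ≤ d ^ 2 * d ^ c := by gcongr; nlinarith
        _ = d ^ (c + 2) := by ring
        _ ≤ d ^ n := pow_le_pow_right₀ (by omega) <| by
          obtain ⟨i, rfl⟩ := hc
          obtain ⟨j, rfl⟩ := hn
          omega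
    rw [hc.neg_pow, hn.neg_pow, abs_of_pos (by omega), abs_of_pos (by omega)]
    omega
  · rw [hc.neg_pow, hn.neg_pow, abs_of_pos (by omega), abs_of_neg (by omega)]
    omega
  · rw [hc.neg_pow, hn.neg_pow, abs_of_nonpos (by omega), abs_of_pos (by omega)]
    omega
  · rw [hc.neg_pow, hn.neg_pow, abs_of_nonpos (by omega), abs_of_neg (by omega)]
    omega

/-- for `d ≥ 2`, `q = -d`, any `m₁, m₂ ∈ ℕ` and `n ≥ 1`, the integer `q^n - 1`
does not divide `q^{m₁} + q^{m₂}`. -/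
theorem not_dvd_pow_add_pow (d q : ℤ) (hd : 2 ≤ d) (hq : q = -d) (m₁ m₂ n : ℕ) (hn : 1 ≤ n) :
    ¬ (q ^ n - 1 ∣ q ^ m₁ + q ^ m₂) := by
  subst hq
  intro h
  obtain ⟨c, hcn, hc⟩ := Int.exists_lt_dvd_pow_add_one_of_dvd_pow_add_pow hn h
  exact neg_pow_add_one_ne_zero hd c <|
    Int.eq_zero_of_abs_lt_dvd ((abs_dvd _ _).mpr hc) (abs_neg_pow_add_one_lt hd hcn)
end
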